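/- arXiv:1801.09736 — 4 statements merged into one kernel-verified Lean document; each statement's English description precedes it below -/
import Mathlib

section
/- Let β ≥ 1 and N ∈ ℕ with N ≥ 1, and define the graded mesh points x_k = (k/N)^β for k = 0, …, N. Then for every k ≥ 2 and every x ∈ [x_{k-1}, x_k], the mesh width h_k = x_k − x_{k-1} satisfies h_k ≤ β · 2^{β·γ̃} · (1/N) · x^{γ̃}, where γ̃ = 1 − 1/β. -/
/-!
Convexity of `y ↦ y ^ β` bounds `x_k^β - x_{k-1}^β` by `β x_k^(β-1) h_k`. Since
`k / N ≤ 2 (k - 1) / N` for `k ≥ 2`, the factor `x_k^(β-1)` is at most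
`2^(β-1) x_{k-1}^(β-1) = 2^(β-1) (x_{k-1}^β)^(1 - 1/β)`, and `x_{k-1}^β ≤ x`.
-/

open Real

theorem mul_one_sub_one_div_self {K : Type*} [DivisionRing K] {p : K} (hp : p ≠ 0) :
    p * (1 - 1 / p) = p - 1 := by
  rw [mul_one_sub, mul_one_div_cancel hp]

namespace Real

theorem rpow_sub_rpow_le_mul_rpow_sub_one {a b p : ℝ} (hb : 0 ≤ b) (hba : b ≤ a)
    (hp : 1 ≤ p) : a ^ p - b ^ p ≤ p * a ^ (p - 1) * (a - b) := by
  rcases hba.eq_or_lt with rfl | hlt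
  · simp
  have hslope := (convexOn_rpow hp).slope_le_of_hasDerivAt (Set.mem_Ici.2 hb)
    (Set.mem_Ici.2 (hb.trans hba)) hlt (hasDerivAt_rpow_const (Or.inr hp))
  rw [slope_def_field] at hslope
  exact (div_le_iff₀ (sub_pos.2 hlt)).1 hslope

theorem rpow_sub_rpow_le_of_le_two_mul {a b p x : ℝ} (hb : 0 ≤ b) (hba : b ≤ a)
    (hab : a ≤ 2 * b) (hp : 1 ≤ p) (hx : b ^ p ≤ x) :
    a ^ p - b ^ p ≤ p * 2 ^ (p - 1) * (a - b) * x ^ (1 - 1 / p) := by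
  have hγ : 0 ≤ 1 - 1 / p := sub_nonneg.2 ((div_le_one (by positivity)).2 hp)
  have hpow : a ^ (p - 1) ≤ 2 ^ (p - 1) * x ^ (1 - 1 / p) :=
    calc a ^ (p - 1) ≤ (2 * b) ^ (p - 1) := rpow_le_rpow (hb.trans hba) hab (by linarith)
      _ = 2 ^ (p - 1) * (b ^ p) ^ (1 - 1 / p) := by
        rw [mul_rpow zero_le_two hb, ← rpow_mul hb, mul_one_sub_one_div_self (by positivity)]
      _ ≤ 2 ^ (p - 1) * x ^ (1 - 1 / p) := by gcongr
  calc a ^ p - b ^ p ≤ p * a ^ (p - 1) * (a - b) := rpow_sub_rpow_le_mul_rpow_sub_one hb hba hp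
    _ ≤ p * (2 ^ (p - 1) * x ^ (1 - 1 / p)) * (a - b) := by gcongr
    _ = p * 2 ^ (p - 1) * (a - b) * x ^ (1 - 1 / p) := by ring

end Real

theorem stmt_2_general (β : ℝ) (hβ : 1 ≤ β) (N : ℕ) (k : ℕ) (hk : 2 ≤ k)
    (x : ℝ)
    (hx₁ : (((k:ℝ) - 1)/N) ^ β ≤ x) :
    ((k:ℝ)/N) ^ β - (((k:ℝ) - 1)/N) ^ β ≤
      β * 2 ^ (β * (1 - 1/β)) * (1/N) * x ^ (1 - 1/β) := by
  have hk2 : (2:ℝ) ≤ k := by exact_mod_cast hk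
  have hwidth : (k:ℝ) / N - ((k:ℝ) - 1) / N = 1 / N := by ring
  rw [mul_one_sub_one_div_self (by positivity), ← hwidth]
  refine rpow_sub_rpow_le_of_le_two_mul (div_nonneg (by linarith) N.cast_nonneg) ?_ ?_ hβ hx₁
  · gcongr
    linarith
  · rw [mul_div_assoc']
    gcongr
    linarith

/-- Graded-mesh width estimate: for the β-graded mesh x_k = (k/N)^β with β ≥ 1,
for k ≥ 2 and x ∈ [x_{k-1}, x_k] the local mesh width h_k = x_k - x_{k-1} satisfies
h_k ≤ β · 2^{β γ̃} · (1/N) · x^{γ̃} with γ̃ = 1 - 1/β. -/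
theorem stmt_2 (β : ℝ) (hβ : 1 ≤ β) (N : ℕ) (hN : 1 ≤ N) (k : ℕ) (hk : 2 ≤ k)
    (hkN : k ≤ N) (x : ℝ)
    (hx₁ : (((k:ℝ) - 1)/N) ^ β ≤ x) (hx₂ : x ≤ ((k:ℝ)/N) ^ β) :
    ((k:ℝ)/N) ^ β - (((k:ℝ) - 1)/N) ^ β ≤
      β * 2 ^ (β * (1 - 1/β)) * (1/N) * x ^ (1 - 1/β) :=
  stmt_2_general β hβ N k hk x hx₁
end

section
/- Let a > 0 and consider f(y) = y^{a} on [0,1]. For the β-graded mesh with nodes y_k = (k/N)^β (β ≥ 1) and the continuous piecewise-linear interpolant Π¹f interpolating f at the nodes, the L²(0,1)-error satisfies ‖f − Π¹f‖_{L²(0,1)} ≤ C · N^{−min{β(a + 1/2), 2}} for a constant C independent of N (with an arbitrarily small loss ε > 0 in the exponent in the limiting case). -/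
open Real MeasureTheory

/-!
On an element `[p, q]` with `0 < p`, two mean value theorems bound the interpolation error of `f`
by `(q - p)` times the oscillation of `f'` on `[p, q]`; for `f = (· ^ a)` this is
`a |q ^ (a - 1) - p ^ (a - 1)| (q - p)`. On the graded mesh, `q - p` and that oscillation are
discrete derivatives of `t ^ s` at `t = k`, so element `k ≥ 2` contributes
`O(k ^ (β(2a+1) - 5) N ^ (-β(2a+1)))` to the squared error. On the first element, where `f'` is
singular, `f` and its interpolant both lie in `[0, q ^ a]`, which gives
`q ^ (2a+1) = N ^ (-β(2a+1))`.
Finally `∑ k ≤ N, k ^ (β(2a+1) - 5) = O(N ^ (max (β(2a+1) - 4) 0 + ε))`.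
-/

open Set

noncomputable section

def linInterp (f : ℝ → ℝ) (p q y : ℝ) : ℝ := f p + (y - p) * (f q - f p) / (q - p)

def interpErrSq (f : ℝ → ℝ) (p q : ℝ) : ℝ := ∫ y in Ioc p q, (f y - linInterp f p q y) ^ 2

end

theorem abs_sub_linInterp_le_of_monotoneOn {f : ℝ → ℝ} {p q y : ℝ} (hpq : p < q)
    (hf : MonotoneOn f (Icc p q)) (hy : y ∈ Icc p q) :
    |f y - linInterp f p q y| ≤ f q - f p := by
  have hfy := hf.mapsTo_Icc hy
  have hD : 0 ≤ f q - f p := sub_nonneg.2 (hf (left_mem_Icc.2 hpq.le) (right_mem_Icc.2 hpq.le)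
    hpq.le)
  have hslope : (y - p) * (f q - f p) / (q - p) ≤ f q - f p := by
    rw [div_le_iff₀ (sub_pos.2 hpq)]
    nlinarith [hy.2]
  have hslope₀ : 0 ≤ (y - p) * (f q - f p) / (q - p) :=
    div_nonneg (mul_nonneg (by linarith [hy.1]) hD) (by linarith)
  rw [abs_sub_le_iff, linInterp]
  constructor <;> linarith [hfy.1, hfy.2]

theorem abs_sub_linInterp_le {f f' : ℝ → ℝ} {p q y ω : ℝ} (hpq : p < q) (hy : y ∈ Ioc p q)
    (hf : ∀ x ∈ Icc p q, HasDerivAt f (f' x) x)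
    (hω : ∀ x ∈ Icc p q, ∀ z ∈ Icc p q, |f' x - f' z| ≤ ω) :
    |f y - linInterp f p q y| ≤ ω * (q - p) := by
  have hcont : ContinuousOn f (Icc p q) := fun x hx => (hf x hx).continuousAt.continuousWithinAt
  obtain ⟨ξ, hξ, hξy⟩ := exists_hasDerivAt_eq_slope f f' hy.1
    (hcont.mono (Icc_subset_Icc_right hy.2)) fun x hx => hf x ⟨hx.1.le, hx.2.le.trans hy.2⟩
  obtain ⟨η, hη, hηq⟩ := exists_hasDerivAt_eq_slope f f' hpq hcont
    fun x hx => hf x (Ioo_subset_Icc_self hx)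
  have hyp : 0 < y - p := sub_pos.2 hy.1
  have herr : f y - linInterp f p q y = (y - p) * (f' ξ - f' η) := by
    rw [hξy, hηq, linInterp]
    field_simp
    ring
  rw [herr, abs_mul, abs_of_pos hyp, mul_comm ω]
  exact mul_le_mul (by linarith [hy.2])
    (hω ξ ⟨hξ.1.le, hξ.2.le.trans hy.2⟩ η (Ioo_subset_Icc_self hη)) (abs_nonneg _) (by linarith)

theorem interpErrSq_le {f : ℝ → ℝ} {p q B : ℝ} (hpq : p ≤ q)
    (hB : ∀ y ∈ Ioc p q, |f y - linInterp f p q y| ≤ B) :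
    interpErrSq f p q ≤ B ^ 2 * (q - p) := by
  have h := norm_setIntegral_le_of_norm_le_const (μ := volume) (C := B ^ 2)
    (f := fun y => (f y - linInterp f p q y) ^ 2) measure_Ioc_lt_top fun y hy => by
      rw [Real.norm_eq_abs, abs_pow]
      exact pow_le_pow_left₀ (abs_nonneg _) (hB y hy) 2
  rw [Real.volume_real_Ioc_of_le hpq] at h
  exact (le_abs_self _).trans h

theorem abs_rpow_sub_rpow_le_of_mem_uIcc {p q x z : ℝ} (r : ℝ) (hp : 0 < p) (hq : 0 < q)
    (hx : x ∈ uIcc p q) (hz : z ∈ uIcc p q) :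
    |x ^ r - z ^ r| ≤ |q ^ r - p ^ r| := by
  have hpos : uIcc p q ⊆ Ioi 0 := fun t ht => lt_of_lt_of_le (lt_min hp hq) ht.1
  have hmaps : MapsTo (fun t : ℝ => t ^ r) (uIcc p q) (uIcc (p ^ r) (q ^ r)) := by
    rcases le_total 0 r with hr | hr
    · exact ((monotoneOn_rpow_Ici_of_exponent_nonneg hr).mono
        (hpos.trans Ioi_subset_Ici_self)).mapsTo_uIcc
    · exact ((antitoneOn_rpow_Ioi_of_exponent_nonpos hr).mono hpos).mapsTo_uIcc
  exact abs_sub_le_of_uIcc_subset_uIcc (uIcc_subset_uIcc (hmaps hz) (hmaps hx))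

theorem interpErrSq_rpow_le {a p q : ℝ} (ha : 0 < a) (hp : 0 < p) (hpq : p < q) :
    interpErrSq (· ^ a) p q ≤ (a * |q ^ (a - 1) - p ^ (a - 1)| * (q - p)) ^ 2 * (q - p) := by
  have hq : 0 < q := hp.trans hpq
  refine interpErrSq_le hpq.le fun y hy => abs_sub_linInterp_le hpq hy
    (fun x hx => hasDerivAt_rpow_const (Or.inl (hp.trans_le hx.1).ne')) fun x hx z hz => ?_
  rw [← mul_sub, abs_mul, abs_of_pos ha]
  exact mul_le_mul_of_nonneg_left (abs_rpow_sub_rpow_le_of_mem_uIcc _ hp hq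
    (Icc_subset_uIcc hx) (Icc_subset_uIcc hz)) ha.le

theorem interpErrSq_rpow_zero_le {a q : ℝ} (ha : 0 < a) (hq : 0 < q) :
    interpErrSq (· ^ a) 0 q ≤ (q ^ a) ^ 2 * q := by
  have hmono : MonotoneOn (· ^ a) (Icc 0 q) :=
    (monotoneOn_rpow_Ici_of_exponent_nonneg ha.le).mono Icc_subset_Ici_self
  simpa [zero_rpow ha.ne'] using interpErrSq_le hq.le fun y hy =>
    abs_sub_linInterp_le_of_monotoneOn hq hmono (Ioc_subset_Icc_self hy)

theorem rpow_le_two_rpow_abs_mul_rpow {ξ x s : ℝ} (hx : 0 < x) (hξ : x / 2 ≤ ξ) (hξx : ξ ≤ x) :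
    ξ ^ s ≤ 2 ^ |s| * x ^ s := by
  have hξ₀ : 0 < ξ := (half_pos hx).trans_le hξ
  rcases le_or_gt 0 s with hs | hs
  · calc ξ ^ s ≤ x ^ s := rpow_le_rpow hξ₀.le hξx hs
      _ ≤ 2 ^ |s| * x ^ s :=
        le_mul_of_one_le_left (by positivity) (one_le_rpow one_le_two (abs_nonneg s))
  · calc ξ ^ s ≤ (x / 2) ^ s := rpow_le_rpow_of_nonpos (half_pos hx) hξ hs.le
      _ = 2 ^ |s| * x ^ s := by
        rw [div_rpow hx.le zero_le_two, abs_of_neg hs, rpow_neg zero_le_two, div_eq_mul_inv,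
          mul_comm]

theorem abs_rpow_sub_rpow_sub_one_le (s : ℝ) {x : ℝ} (hx : 2 ≤ x) :
    |x ^ s - (x - 1) ^ s| ≤ |s| * 2 ^ |s - 1| * x ^ (s - 1) := by
  have hx₁ : 0 < x - 1 := by linarith
  obtain ⟨ξ, hξ, hslope⟩ := exists_hasDerivAt_eq_slope (fun t => t ^ s) (fun t => s * t ^ (s - 1))
    (sub_one_lt x) (continuousOn_id.rpow_const fun t ht => Or.inl (hx₁.trans_le ht.1).ne')
    fun t ht => hasDerivAt_rpow_const (Or.inl (hx₁.trans ht.1).ne')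
  have hξ₀ : 0 < ξ := hx₁.trans hξ.1
  rw [sub_sub_cancel, div_one] at hslope
  rw [← hslope, abs_mul, abs_of_pos (rpow_pos_of_pos hξ₀ _), mul_assoc]
  exact mul_le_mul_of_nonneg_left (rpow_le_two_rpow_abs_mul_rpow (by linarith)
    (by linarith [hξ.1]) hξ.2.le) (abs_nonneg s)

theorem abs_div_rpow_sub_div_rpow_le (s : ℝ) {x N : ℝ} (hx : 2 ≤ x) (hN : 0 < N) :
    |(x / N) ^ s - ((x - 1) / N) ^ s| ≤ |s| * 2 ^ |s - 1| * (x ^ (s - 1) * N ^ (-s)) := by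
  rw [div_rpow (by linarith) hN.le, div_rpow (by linarith) hN.le, div_eq_mul_inv, div_eq_mul_inv,
    ← sub_mul, abs_mul, abs_of_pos (inv_pos.2 (rpow_pos_of_pos hN s)), ← rpow_neg hN.le,
    ← mul_assoc]
  exact mul_le_mul_of_nonneg_right (abs_rpow_sub_rpow_sub_one_le s hx) (by positivity)

theorem exists_interpErrSq_rpow_graded_le {a β : ℝ} (ha : 0 < a) (hβ : 0 < β) :
    ∃ C, 0 ≤ C ∧ ∀ N : ℝ, 0 < N → ∀ x : ℝ, 2 ≤ x →
      interpErrSq (· ^ a) (((x - 1) / N) ^ β) ((x / N) ^ β) ≤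
        C * x ^ (β * (2 * a + 1) - 5) * N ^ (-(β * (2 * a + 1))) := by
  set r := β * (a - 1)
  set c₁ := |r| * 2 ^ |r - 1|
  set c₂ := β * 2 ^ |β - 1|
  refine ⟨(a * c₁ * c₂) ^ 2 * c₂, by positivity, fun N hN x hx => ?_⟩
  have hx₀ : 0 < x := by linarith
  have hu : 0 < (x - 1) / N := div_pos (by linarith) hN
  have hpq : ((x - 1) / N) ^ β < (x / N) ^ β :=
    rpow_lt_rpow hu.le (div_lt_div_of_pos_right (sub_one_lt x) hN) hβ
  have hstep : (x / N) ^ β - ((x - 1) / N) ^ β ≤ c₂ * (x ^ (β - 1) * N ^ (-β)) := by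
    have h := abs_div_rpow_sub_div_rpow_le β hx hN
    rwa [abs_of_pos hβ, abs_of_pos (sub_pos.2 hpq)] at h
  have hosc : |((x / N) ^ β) ^ (a - 1) - (((x - 1) / N) ^ β) ^ (a - 1)| ≤
      c₁ * (x ^ (r - 1) * N ^ (-r)) := by
    rw [← rpow_mul (by positivity), ← rpow_mul hu.le]
    exact abs_div_rpow_sub_div_rpow_le r hx hN
  have hx_exp : x ^ (β * (2 * a + 1) - 5) =
      x ^ (r - 1) * x ^ (r - 1) * x ^ (β - 1) * x ^ (β - 1) * x ^ (β - 1) := by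
    simp only [← rpow_add hx₀]; congr 1; ring
  have hN_exp :
      N ^ (-(β * (2 * a + 1))) = N ^ (-r) * N ^ (-r) * N ^ (-β) * N ^ (-β) * N ^ (-β) := by
    simp only [← rpow_add hN]; congr 1; ring
  calc interpErrSq (· ^ a) (((x - 1) / N) ^ β) ((x / N) ^ β)
      ≤ (a * |((x / N) ^ β) ^ (a - 1) - (((x - 1) / N) ^ β) ^ (a - 1)| *
          ((x / N) ^ β - ((x - 1) / N) ^ β)) ^ 2 * ((x / N) ^ β - ((x - 1) / N) ^ β) :=
        interpErrSq_rpow_le ha (rpow_pos_of_pos hu β) hpq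
    _ ≤ (a * (c₁ * (x ^ (r - 1) * N ^ (-r))) * (c₂ * (x ^ (β - 1) * N ^ (-β)))) ^ 2 *
          (c₂ * (x ^ (β - 1) * N ^ (-β))) := by
        have := sub_pos.2 hpq
        gcongr
    _ = (a * c₁ * c₂) ^ 2 * c₂ * x ^ (β * (2 * a + 1) - 5) * N ^ (-(β * (2 * a + 1))) := by
        rw [hx_exp, hN_exp]; ring

theorem interpErrSq_rpow_graded_first_le {a β N : ℝ} (ha : 0 < a) (hβ : 0 < β) (hN : 0 < N) :
    interpErrSq (· ^ a) (((1 - 1) / N) ^ β) ((1 / N) ^ β) ≤ N ^ (-(β * (2 * a + 1))) := by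
  rw [sub_self, zero_div, zero_rpow hβ.ne', one_div, inv_rpow hN.le, ← rpow_neg hN.le]
  calc _ ≤ ((N ^ (-β)) ^ a) ^ 2 * N ^ (-β) := interpErrSq_rpow_zero_le ha (by positivity)
    _ = N ^ (-(β * (2 * a + 1))) := by
      rw [← rpow_mul hN.le, ← rpow_natCast, ← rpow_mul hN.le, ← rpow_add hN]
      congr 1; push_cast; ring

theorem exists_sum_Icc_rpow_le (σ : ℝ) {ε : ℝ} (hε : 0 < ε) :
    ∃ C, 0 ≤ C ∧ ∀ N : ℕ,
      ∑ k ∈ Finset.Icc 1 N, (k : ℝ) ^ σ ≤ C * (N : ℝ) ^ (max (σ + 1) 0 + ε) := by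
  set τ := max (σ + 1) 0 + ε
  have hτ : 0 ≤ τ := by positivity
  have hsum : Summable fun n : ℕ => (n : ℝ) ^ (σ - τ) :=
    summable_nat_rpow.2 (by linarith [le_max_left (σ + 1) 0])
  refine ⟨∑' n : ℕ, (n : ℝ) ^ (σ - τ), tsum_nonneg fun n => by positivity, fun N => ?_⟩
  calc ∑ k ∈ Finset.Icc 1 N, (k : ℝ) ^ σ
      ≤ ∑ k ∈ Finset.Icc 1 N, (k : ℝ) ^ (σ - τ) * (N : ℝ) ^ τ := by
        refine Finset.sum_le_sum fun k hk => ?_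
        obtain ⟨hk₁, hkN⟩ := Finset.mem_Icc.1 hk
        have hk₀ : (0 : ℝ) < k := by exact_mod_cast hk₁
        rw [← sub_add_cancel σ τ, rpow_add hk₀, add_sub_cancel_right]
        gcongr
    _ = (∑ k ∈ Finset.Icc 1 N, (k : ℝ) ^ (σ - τ)) * (N : ℝ) ^ τ := (Finset.sum_mul ..).symm
    _ ≤ (∑' n : ℕ, (n : ℝ) ^ (σ - τ)) * (N : ℝ) ^ τ := by
        gcongr
        exact hsum.sum_le_tsum _ fun n _ => by positivity

theorem exists_sum_interpErrSq_rpow_graded_le {a β ε : ℝ} (ha : 0 < a) (hβ : 0 < β)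
    (hε : 0 < ε) : ∃ C, 0 < C ∧ ∀ N : ℕ, 1 ≤ N →
      ∑ k ∈ Finset.Icc 1 N, interpErrSq (· ^ a) ((((k : ℝ) - 1) / N) ^ β) (((k : ℝ) / N) ^ β) ≤
        C * (N : ℝ) ^ (-min (β * (2 * a + 1)) 4 + ε) := by
  set s := β * (2 * a + 1)
  obtain ⟨C₂, hC₂, hterm⟩ := exists_interpErrSq_rpow_graded_le ha hβ
  obtain ⟨C₃, hC₃, hpow⟩ := exists_sum_Icc_rpow_le (s - 5) hε
  refine ⟨1 + C₂ * C₃, by positivity, fun N hN => ?_⟩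
  have hN₀ : (0 : ℝ) < N := by exact_mod_cast hN
  have hexp : -s + (max (s - 5 + 1) 0 + ε) = -min s 4 + ε := by
    rcases le_total s 4 with h | h
    · rw [min_eq_left h, max_eq_right (by linarith)]; ring
    · rw [min_eq_right h, max_eq_left (by linarith)]; ring
  have hrest :
      ∑ k ∈ Finset.Ioc 1 N, interpErrSq (· ^ a) ((((k : ℝ) - 1) / N) ^ β) (((k : ℝ) / N) ^ β) ≤
        C₂ * C₃ * (N : ℝ) ^ (-min s 4 + ε) := by
    calc _ ≤ ∑ k ∈ Finset.Ioc 1 N, C₂ * (N : ℝ) ^ (-s) * (k : ℝ) ^ (s - 5) := by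
          refine Finset.sum_le_sum fun k hk => ?_
          have hk : (2 : ℝ) ≤ k := by exact_mod_cast (Finset.mem_Ioc.1 hk).1
          linarith [hterm N hN₀ k hk, mul_right_comm C₂ ((k : ℝ) ^ (s - 5)) ((N : ℝ) ^ (-s))]
        _ ≤ ∑ k ∈ Finset.Icc 1 N, C₂ * (N : ℝ) ^ (-s) * (k : ℝ) ^ (s - 5) :=
          Finset.sum_le_sum_of_subset_of_nonneg Finset.Ioc_subset_Icc_self fun _ _ _ => by
            positivity
        _ = C₂ * (N : ℝ) ^ (-s) * ∑ k ∈ Finset.Icc 1 N, (k : ℝ) ^ (s - 5) :=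
          (Finset.mul_sum ..).symm
        _ ≤ C₂ * (N : ℝ) ^ (-s) * (C₃ * (N : ℝ) ^ (max (s - 5 + 1) 0 + ε)) := by
          gcongr; exact hpow N
        _ = C₂ * C₃ * (N : ℝ) ^ (-min s 4 + ε) := by
          rw [mul_mul_mul_comm, ← rpow_add hN₀, hexp]
  have hdecay : (N : ℝ) ^ (-s) ≤ (N : ℝ) ^ (-min s 4 + ε) :=
    rpow_le_rpow_of_exponent_le (by exact_mod_cast hN) (by linarith [min_le_left s 4])
  have hfirst := interpErrSq_rpow_graded_first_le ha hβ hN₀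
  rw [← Finset.add_sum_Ioc_eq_sum_Icc hN, Nat.cast_one]
  linarith

/-- Lemma 8 (s = 0 case): L² error of the continuous piecewise-linear nodal interpolant
of y^a, a > 0, on the β-graded mesh y_k = (k/N)^β, β ≥ 1:
‖f - Π¹f‖_{L²(0,1)} ≤ C · N^{-min{β(a+1/2),2} + ε} for every ε > 0, C independent of N. -/
theorem stmt_6 (a β : ℝ) (ha : 0 < a) (hβ : 1 ≤ β) :
    ∀ ε : ℝ, 0 < ε → ∃ C : ℝ, 0 < C ∧ ∀ N : ℕ, 1 ≤ N →
      Real.sqrt (∑ k ∈ Finset.Icc 1 N,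
        ∫ y in Set.Ioc ((((k:ℝ) - 1)/N) ^ β) (((k:ℝ)/N) ^ β),
          (y ^ a - (((((k:ℝ) - 1)/N) ^ β) ^ a +
            (y - (((k:ℝ) - 1)/N) ^ β) *
              ((((k:ℝ)/N) ^ β) ^ a - ((((k:ℝ) - 1)/N) ^ β) ^ a) /
              (((k:ℝ)/N) ^ β - (((k:ℝ) - 1)/N) ^ β)))^2)
      ≤ C * (N:ℝ) ^ (-(min (β*(a + 1/2)) 2) + ε) := by
  intro ε hε
  obtain ⟨C, hC, hsum⟩ :=
    exists_sum_interpErrSq_rpow_graded_le ha (by linarith : 0 < β) (by positivity : 0 < 2 * ε)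
  refine ⟨√C, sqrt_pos.2 hC, fun N hN => ?_⟩
  have hN₀ : (0 : ℝ) < N := by exact_mod_cast hN
  have hexp : -min (β * (2 * a + 1)) 4 + 2 * ε = (-(min (β * (a + 1 / 2)) 2) + ε) * (2 : ℕ) := by
    rw [show β * (2 * a + 1) = 2 * (β * (a + 1 / 2)) by ring, show (4 : ℝ) = 2 * 2 by norm_num,
      ← mul_min_of_nonneg _ _ zero_le_two]
    push_cast; ring
  change √(∑ k ∈ Finset.Icc 1 N,
    interpErrSq (· ^ a) ((((k : ℝ) - 1) / N) ^ β) (((k : ℝ) / N) ^ β)) ≤ _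
  calc _ ≤ √(C * ((N : ℝ) ^ (-(min (β * (a + 1 / 2)) 2) + ε)) ^ 2) := by
        rw [← rpow_natCast, ← rpow_mul hN₀.le, ← hexp]
        exact sqrt_le_sqrt (hsum N hN)
    _ = √C * (N : ℝ) ^ (-(min (β * (a + 1 / 2)) 2) + ε) := by
        rw [sqrt_mul hC.le, sqrt_sq (by positivity)]
end

section
/- Let R = (0,h₁)×(0,h₂) and Δt > 0, and let u ∈ L²((0,Δt), H⁰(R)) be such that its mean-zero part satisfies the anisotropic Poincaré inequality. Then for the orthogonal projection U of u onto constants, the negative-norm error obeys the duality bound: ‖u − U‖_{L²((0,Δt), H^{−1}(R))} ≤ C · max{h₁, h₂, Δt} · (Δt·‖∂_t u‖_{L²} + h₁·‖∂_x u‖_{L²} + h₂·‖∂_y u‖_{L²}), provided u ∈ H¹((0,Δt)×R). -/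
/-!
Because `u - U` has mean zero, `∫ (u - U) v = ∫ (u - U) (v - V)` with `V` the mean of `v`, and the
Cauchy–Schwarz inequality reduces the duality bound to Poincaré inequalities for `u` and `v` on
the box `R = (0, a] × (0, b] × (0, c]`.

The Poincaré inequality comes from the identity `∫∫ (w p - w q)² = 2 |R| ∫ (w - W)²`: joining `q`
to `p` by three segments parallel to the axes, each increment of `w` is bounded by the
one-dimensional Cauchy–Schwarz inequality along its segment, and integrating over `p` and `q`
(Fubini) gives `∫ (w - W)² ≤ 3/2 (a² ‖∂₁w‖² + b² ‖∂₂w‖² + c² ‖∂₃w‖²)`. For `v` the three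
directional derivatives are bounded by the full gradient, which produces the factor
`max {a, b, c}`.
-/

open Real MeasureTheory Set Function

section L2

variable {α : Type*} [MeasurableSpace α] {μ : Measure α} {f g : α → ℝ}

theorem sq_integral_mul_le (hf : MemLp f 2 μ) (hg : MemLp g 2 μ) :
    (∫ x, f x * g x ∂μ) ^ 2 ≤ (∫ x, f x ^ 2 ∂μ) * ∫ x, g x ^ 2 ∂μ := by
  have hfg : Integrable (fun x ↦ f x * g x) μ := hf.integrable_mul hg
  have hquad : ∀ t : ℝ, 0 ≤ (∫ x, g x ^ 2 ∂μ) * (t * t) + 2 * (∫ x, f x * g x ∂μ) * t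
      + ∫ x, f x ^ 2 ∂μ := by
    intro t
    have e : ∀ x, (f x + t * g x) ^ 2 = (t * t) * g x ^ 2 + (2 * t) * (f x * g x) + f x ^ 2 :=
      fun x ↦ by ring
    have h : 0 ≤ ∫ x, (f x + t * g x) ^ 2 ∂μ := integral_nonneg fun x ↦ sq_nonneg _
    have h₁ : Integrable (fun x ↦ t * t * g x ^ 2) μ := hg.integrable_sq.const_mul _
    have h₂ : Integrable (fun x ↦ 2 * t * (f x * g x)) μ := hfg.const_mul _
    have h₁₂ : Integrable (fun x ↦ t * t * g x ^ 2 + 2 * t * (f x * g x)) μ := h₁.add h₂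
    simp_rw [e] at h
    rw [integral_add h₁₂ hf.integrable_sq, integral_add h₁ h₂, integral_const_mul,
      integral_const_mul] at h
    linarith
  have := discrim_le_zero hquad
  rw [discrim] at this
  linarith

theorem integral_sq_apply_le_integral_sq_norm {E : Type*} [NormedAddCommGroup E]
    [NormedSpace ℝ E] {L : α → E →L[ℝ] ℝ}
    (hL : Integrable (fun x ↦ ‖L x‖ ^ 2) μ) {e : E} (he : ‖e‖ ≤ 1) :
    ∫ x, L x e ^ 2 ∂μ ≤ ∫ x, ‖L x‖ ^ 2 ∂μ := by
  refine integral_mono_of_nonneg (.of_forall fun x ↦ sq_nonneg _) hL (.of_forall fun x ↦ ?_)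
  have h : |L x e| ≤ ‖L x‖ := by
    simpa only [Real.norm_eq_abs] using
      ((L x).le_opNorm e).trans (mul_le_of_le_one_right (norm_nonneg _) he)
  simpa only [sq_abs] using pow_le_pow_left₀ (abs_nonneg _) h 2

variable [IsFiniteMeasure μ]

theorem integral_sub_average_mul (hf : MemLp f 2 μ) (hg : MemLp g 2 μ) :
    ∫ x, (f x - ⨍ y, f y ∂μ) * g x ∂μ =
      ∫ x, (f x - ⨍ y, f y ∂μ) * (g x - ⨍ y, g y ∂μ) ∂μ := by
  have hf' : MemLp (fun x ↦ f x - ⨍ y, f y ∂μ) 2 μ := hf.sub (memLp_const _)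
  have e : ∀ x, (f x - ⨍ y, f y ∂μ) * (g x - ⨍ y, g y ∂μ) =
      (f x - ⨍ y, f y ∂μ) * g x - (⨍ y, g y ∂μ) * (f x - ⨍ y, f y ∂μ) := fun x ↦ by ring
  have hfg : Integrable (fun x ↦ (f x - ⨍ y, f y ∂μ) * g x) μ := hf'.integrable_mul hg
  simp_rw [e]
  rw [integral_sub hfg ((hf'.integrable one_le_two).const_mul _),
    integral_const_mul, integral_sub_average, mul_zero, sub_zero]

theorem sq_integral_sub_average_mul_le (hf : MemLp f 2 μ) (hg : MemLp g 2 μ) :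
    (∫ x, (f x - ⨍ y, f y ∂μ) * g x ∂μ) ^ 2 ≤
      (∫ x, (f x - ⨍ y, f y ∂μ) ^ 2 ∂μ) * ∫ x, (g x - ⨍ y, g y ∂μ) ^ 2 ∂μ := by
  rw [integral_sub_average_mul hf hg]
  exact sq_integral_mul_le (hf.sub (memLp_const _)) (hg.sub (memLp_const _))

theorem integral_prod_sub_sq (hf : MemLp f 2 μ) :
    ∫ z, (f z.1 - f z.2) ^ 2 ∂μ.prod μ = 2 * μ.real univ * ∫ x, (f x - ⨍ y, f y ∂μ) ^ 2 ∂μ := by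
  have hf1 : Integrable f μ := hf.integrable one_le_two
  have hf2 : Integrable (fun x ↦ f x ^ 2) μ := hf.integrable_sq
  have hm : μ.real univ * ⨍ y, f y ∂μ = ∫ x, f x ∂μ := measure_smul_average μ f
  have e₁ : ∀ z : α × α, (f z.1 - f z.2) ^ 2 = f z.1 ^ 2 + f z.2 ^ 2 - 2 * (f z.1 * f z.2) :=
    fun z ↦ by ring
  have e₂ : ∀ x, (f x - ⨍ y, f y ∂μ) ^ 2 =
      f x ^ 2 - (2 * ⨍ y, f y ∂μ) * f x + (⨍ y, f y ∂μ) ^ 2 := fun x ↦ by ring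
  have hsum : Integrable (fun z : α × α ↦ f z.1 ^ 2 + f z.2 ^ 2) (μ.prod μ) :=
    (hf2.comp_fst μ).add (hf2.comp_snd μ)
  have hquad : Integrable (fun x ↦ f x ^ 2 - (2 * ⨍ y, f y ∂μ) * f x) μ :=
    hf2.sub (hf1.const_mul _)
  simp_rw [e₁, e₂]
  rw [integral_sub hsum ((hf1.mul_prod hf1).const_mul 2),
    integral_add (hf2.comp_fst μ) (hf2.comp_snd μ), integral_const_mul,
    integral_fun_fst (fun x ↦ f x ^ 2), integral_fun_snd (fun x ↦ f x ^ 2), integral_prod_mul,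
    integral_add hquad (integrable_const _),
    integral_sub hf2 (hf1.const_mul _), integral_const_mul, integral_const, ← hm]
  simp only [smul_eq_mul]
  ring

end L2

section SetIntegralProd

variable {X Y E : Type*} [MeasurableSpace X] [MeasurableSpace Y] {μ : Measure X} {ν : Measure Y}
  [SFinite μ] [SFinite ν] [NormedAddCommGroup E] [NormedSpace ℝ E]

theorem setIntegral_prod_fun_fst (f : X → E) (s : Set X) (t : Set Y) :
    ∫ z in s ×ˢ t, f z.1 ∂μ.prod ν = ν.real t • ∫ x in s, f x ∂μ := by
  rw [← Measure.prod_restrict, integral_fun_fst, measureReal_restrict_apply_univ]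

theorem setIntegral_prod_fun_snd (f : Y → E) (s : Set X) (t : Set Y) :
    ∫ z in s ×ˢ t, f z.2 ∂μ.prod ν = μ.real s • ∫ y in t, f y ∂ν := by
  rw [← Measure.prod_restrict, integral_fun_snd, measureReal_restrict_apply_univ]

end SetIntegralProd

section Continuous

variable {X : Type*} [MetricSpace X] [ProperSpace X] [MeasurableSpace X] [OpensMeasurableSpace X]
  {μ : Measure X} [IsFiniteMeasureOnCompacts μ] {f : X → ℝ} {s : Set X}

theorem Continuous.integrableOn_of_isBounded (hf : Continuous f) (hs : Bornology.IsBounded s) :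
    IntegrableOn f s μ :=
  (hf.continuousOn.integrableOn_compact hs.isCompact_closure).mono_set subset_closure

theorem Continuous.memLp_two_restrict_of_isBounded (hf : Continuous f)
    (hs : Bornology.IsBounded s) : MemLp f 2 (μ.restrict s) :=
  (memLp_two_iff_integrable_sq hf.aestronglyMeasurable).2
    ((hf.pow 2).integrableOn_of_isBounded hs)

theorem Continuous.integrable_restrict_prod_restrict {Y : Type*} [MetricSpace Y] [ProperSpace Y]
    [MeasurableSpace Y] [OpensMeasurableSpace Y] {ν : Measure Y} [IsFiniteMeasureOnCompacts ν]
    [SFinite μ] [SFinite ν] {f : X × Y → ℝ} (hf : Continuous f) {t : Set Y}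
    (hs : Bornology.IsBounded s) (ht : Bornology.IsBounded t) :
    Integrable f ((μ.restrict s).prod (ν.restrict t)) := by
  rw [Measure.prod_restrict]
  exact hf.integrableOn_of_isBounded (hs.prod ht)

end Continuous

theorem continuous_parametric_integral_Ioc {X : Type*} [TopologicalSpace X]
    [FirstCountableTopology X] [LocallyCompactSpace X] {f : X → ℝ → ℝ}
    (hf : Continuous (uncurry f)) (a b : ℝ) :
    Continuous fun x ↦ ∫ t in Ioc a b, f x t := by
  simp_rw [← integral_Icc_eq_integral_Ioc]
  exact continuous_parametric_integral_of_continuous hf isCompact_Icc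

theorem sq_sub_le_mul_integral_sq_fderiv {E : Type*} [NormedAddCommGroup E] [NormedSpace ℝ E]
    {w : E → ℝ} (hw : ContDiff ℝ 1 w) {γ : ℝ → E} {e : E} (hγ : ∀ τ, HasDerivAt γ e τ)
    {a s t : ℝ} (hs : s ∈ Icc 0 a) (ht : t ∈ Icc 0 a) :
    (w (γ t) - w (γ s)) ^ 2 ≤ a * ∫ τ in Ioc 0 a, fderiv ℝ w (γ τ) e ^ 2 := by
  set g : ℝ → ℝ := fun τ ↦ fderiv ℝ w (γ τ) e
  have hγc : Continuous γ := continuous_iff_continuousAt.2 fun τ ↦ (hγ τ).continuousAt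
  have hg : Continuous g := ((hw.continuous_fderiv one_ne_zero).comp hγc).clm_apply continuous_const
  have ftc : w (γ t) - w (γ s) = ∫ τ in s..t, g τ :=
    (intervalIntegral.integral_eq_sub_of_hasDerivAt
      (fun τ _ ↦ (hw.differentiable one_ne_zero _).hasFDerivAt.comp_hasDerivAt τ (hγ τ))
      (hg.intervalIntegrable _ _)).symm
  have hsub : Ioc (min s t) (max s t) ⊆ Ioc 0 a :=
    Ioc_subset_Ioc (le_min hs.1 ht.1) (max_le hs.2 ht.2)
  have hlen : volume.real (Ioc (min s t) (max s t)) ≤ a := by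
    rw [Real.volume_real_Ioc_of_le min_le_max]
    linarith [le_min hs.1 ht.1, max_le hs.2 ht.2]
  calc (w (γ t) - w (γ s)) ^ 2 = (∫ τ in Ioc (min s t) (max s t), g τ * 1) ^ 2 := by
        rw [ftc, ← sq_abs, intervalIntegral.abs_integral_eq_abs_integral_uIoc, sq_abs, uIoc]
        simp
    _ ≤ (∫ τ in Ioc (min s t) (max s t), g τ ^ 2) * ∫ τ in Ioc (min s t) (max s t), (1 : ℝ) ^ 2 :=
        sq_integral_mul_le (hg.memLp_two_restrict_of_isBounded (Metric.isBounded_Ioc _ _))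
          (memLp_const 1)
    _ ≤ (∫ τ in Ioc 0 a, g τ ^ 2) * a := by
        refine mul_le_mul ?_ (by simpa using hlen) (integral_nonneg fun _ ↦ by positivity)
          (integral_nonneg fun _ ↦ by positivity)
        exact setIntegral_mono_set ((hg.pow 2).integrableOn_of_isBounded (Metric.isBounded_Ioc _ _))
          (.of_forall fun τ ↦ sq_nonneg (g τ)) hsub.eventuallyLE
    _ = a * ∫ τ in Ioc 0 a, g τ ^ 2 := mul_comm _ _

def box (a b c : ℝ) : Set (ℝ × ℝ × ℝ) := Ioc 0 a ×ˢ (Ioc 0 b ×ˢ Ioc 0 c)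

section Box

variable {a b c : ℝ} {F w : ℝ × ℝ × ℝ → ℝ}

theorem isBounded_box : Bornology.IsBounded (box a b c) :=
  (Metric.isBounded_Ioc _ _).prod ((Metric.isBounded_Ioc _ _).prod (Metric.isBounded_Ioc _ _))

theorem measurableSet_box : MeasurableSet (box a b c) :=
  measurableSet_Ioc.prod (measurableSet_Ioc.prod measurableSet_Ioc)

instance isFiniteMeasure_restrict_box : IsFiniteMeasure (volume.restrict (box a b c)) :=
  isFiniteMeasure_restrict.2 isBounded_box.measure_lt_top.ne

theorem volume_real_box (ha : 0 ≤ a) (hb : 0 ≤ b) (hc : 0 ≤ c) :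
    volume.real (box a b c) = a * b * c := by
  simp [box, measureReal_def, Measure.volume_eq_prod, Measure.prod_prod, ENNReal.toReal_mul, ha,
    hb, hc, mul_assoc]

theorem setIntegral_box (hF : Continuous F) :
    ∫ p in box a b c, F p = ∫ s in Ioc 0 a, ∫ x in Ioc 0 b, ∫ y in Ioc 0 c, F (s, x, y) := by
  rw [box, Measure.volume_eq_prod, setIntegral_prod _ (hF.integrableOn_of_isBounded isBounded_box)]
  refine integral_congr_ae (.of_forall fun s ↦ ?_)
  have hFs : Continuous fun z ↦ F (s, z) := by fun_prop
  exact setIntegral_prod _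
    (hFs.integrableOn_of_isBounded ((Metric.isBounded_Ioc _ _).prod (Metric.isBounded_Ioc _ _)))

theorem sq_sub_le_of_mem_box (hw : ContDiff ℝ 1 w) {p q : ℝ × ℝ × ℝ}
    (hp : p ∈ box a b c) (hq : q ∈ box a b c) :
    (w p - w q) ^ 2 ≤ 3 * (a * (∫ τ in Ioc 0 a, fderiv ℝ w (τ, p.2) (1, 0, 0) ^ 2)
      + b * (∫ ξ in Ioc 0 b, fderiv ℝ w (q.1, ξ, p.2.2) (0, 1, 0) ^ 2)
      + c * ∫ η in Ioc 0 c, fderiv ℝ w (q.1, q.2.1, η) (0, 0, 1) ^ 2) := by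
  obtain ⟨p₁, p₂, p₃⟩ := p
  obtain ⟨q₁, q₂, q₃⟩ := q
  simp only [box, mem_prod, mem_Ioc] at hp hq
  have h₁ := sq_sub_le_mul_integral_sq_fderiv hw (γ := fun τ ↦ (τ, p₂, p₃))
    (fun τ ↦ (hasDerivAt_id' τ).prodMk ((hasDerivAt_const τ p₂).prodMk (hasDerivAt_const τ p₃)))
    ⟨hq.1.1.le, hq.1.2⟩ ⟨hp.1.1.le, hp.1.2⟩
  have h₂ := sq_sub_le_mul_integral_sq_fderiv hw (γ := fun ξ ↦ (q₁, ξ, p₃))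
    (fun ξ ↦ (hasDerivAt_const ξ q₁).prodMk ((hasDerivAt_id' ξ).prodMk (hasDerivAt_const ξ p₃)))
    ⟨hq.2.1.1.le, hq.2.1.2⟩ ⟨hp.2.1.1.le, hp.2.1.2⟩
  have h₃ := sq_sub_le_mul_integral_sq_fderiv hw (γ := fun η ↦ (q₁, q₂, η))
    (fun η ↦ (hasDerivAt_const η q₁).prodMk ((hasDerivAt_const η q₂).prodMk (hasDerivAt_id' η)))
    ⟨hq.2.2.1.le, hq.2.2.2⟩ ⟨hp.2.2.1.le, hp.2.2.2⟩
  set A := w (p₁, p₂, p₃) - w (q₁, p₂, p₃)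
  set B := w (q₁, p₂, p₃) - w (q₁, q₂, p₃)
  set C := w (q₁, q₂, p₃) - w (q₁, q₂, q₃)
  have hABC : w (p₁, p₂, p₃) - w (q₁, q₂, q₃) = A + B + C := by ring
  rw [hABC]
  dsimp only
  nlinarith [sq_nonneg (A - B), sq_nonneg (B - C), sq_nonneg (A - C)]

theorem integral_box_prod_box_lineIntegral₁ (ha : 0 ≤ a) (hb : 0 ≤ b) (hc : 0 ≤ c)
    (hF : Continuous F) :
    ∫ r in box a b c ×ˢ box a b c, ∫ τ in Ioc 0 a, F (τ, r.1.2) =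
      a * b * c * (a * ∫ p in box a b c, F p) := by
  have hswap : ∫ z in Ioc 0 b ×ˢ Ioc 0 c, ∫ τ in Ioc 0 a, F (τ, z) =
      ∫ τ in Ioc 0 a, ∫ z in Ioc 0 b ×ˢ Ioc 0 c, F (τ, z) :=
    integral_integral_swap ((hF.comp continuous_swap).integrable_restrict_prod_restrict
      ((Metric.isBounded_Ioc _ _).prod (Metric.isBounded_Ioc _ _)) (Metric.isBounded_Ioc _ _))
  have hinner : ∫ p in box a b c, (∫ τ in Ioc 0 a, F (τ, p.2)) = a * ∫ p in box a b c, F p := by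
    rw [box, Measure.volume_eq_prod, setIntegral_prod_fun_snd (fun z ↦ ∫ τ in Ioc 0 a, F (τ, z)),
      Real.volume_real_Ioc_of_le ha, sub_zero, smul_eq_mul, hswap,
      setIntegral_prod _ (hF.integrableOn_of_isBounded isBounded_box)]
  rw [Measure.volume_eq_prod,
    setIntegral_prod_fun_fst (fun p : ℝ × ℝ × ℝ ↦ ∫ τ in Ioc 0 a, F (τ, p.2)),
    volume_real_box ha hb hc, hinner, smul_eq_mul]

theorem integral_box_prod_box_lineIntegral₂ (ha : 0 ≤ a) (hb : 0 ≤ b) (hc : 0 ≤ c)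
    (hF : Continuous F) :
    ∫ r in box a b c ×ˢ box a b c, ∫ ξ in Ioc 0 b, F (r.2.1, ξ, r.1.2.2) =
      a * b * c * (b * ∫ p in box a b c, F p) := by
  set H : ℝ × ℝ → ℝ := fun z ↦ ∫ ξ in Ioc 0 b, F (z.1, ξ, z.2)
  have hH : Continuous H :=
    continuous_parametric_integral_Ioc (f := fun (z : ℝ × ℝ) ξ ↦ F (z.1, ξ, z.2)) (by fun_prop) 0 b
  have hHr : Continuous fun r : (ℝ × ℝ × ℝ) × (ℝ × ℝ × ℝ) ↦ H (r.2.1, r.1.2.2) := by fun_prop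
  have hfst : ∀ y, ∫ q in box a b c, H (q.1, y) = b * c * ∫ s in Ioc 0 a, H (s, y) := by
    intro y
    rw [box, Measure.volume_eq_prod, setIntegral_prod_fun_fst (fun s ↦ H (s, y)), smul_eq_mul]
    simp [measureReal_def, Measure.volume_eq_prod, Measure.prod_prod, ENNReal.toReal_mul, hb, hc]
  have hsnd : ∫ p in box a b c, (∫ s in Ioc 0 a, H (s, p.2.2)) =
      a * (b * ∫ y in Ioc 0 c, ∫ s in Ioc 0 a, H (s, y)) := by
    rw [box, Measure.volume_eq_prod,
      setIntegral_prod_fun_snd (fun z : ℝ × ℝ ↦ ∫ s in Ioc 0 a, H (s, z.2)),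
      Measure.volume_eq_prod, setIntegral_prod_fun_snd (fun y ↦ ∫ s in Ioc 0 a, H (s, y)),
      Real.volume_real_Ioc_of_le ha, Real.volume_real_Ioc_of_le hb, sub_zero, sub_zero,
      smul_eq_mul, smul_eq_mul]
  have hswap : ∫ y in Ioc 0 c, ∫ s in Ioc 0 a, H (s, y) = ∫ p in box a b c, F p := by
    have hH' : Continuous (uncurry fun y s ↦ H (s, y)) := hH.comp continuous_swap
    rw [setIntegral_box hF, integral_integral_swap (hH'.integrable_restrict_prod_restrict
      (Metric.isBounded_Ioc _ _) (Metric.isBounded_Ioc _ _))]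
    refine integral_congr_ae (.of_forall fun s ↦ ?_)
    have hFs : Continuous (uncurry fun y ξ ↦ F (s, ξ, y)) := by
      exact hF.comp (continuous_const.prodMk (continuous_snd.prodMk continuous_fst))
    exact integral_integral_swap (hFs.integrable_restrict_prod_restrict
      (Metric.isBounded_Ioc _ _) (Metric.isBounded_Ioc _ _))
  rw [Measure.volume_eq_prod, setIntegral_prod _ (hHr.integrableOn_of_isBounded
      (isBounded_box.prod isBounded_box))]
  simp_rw [hfst]
  rw [integral_const_mul, hsnd, hswap]
  ring

theorem integral_box_prod_box_lineIntegral₃ (ha : 0 ≤ a) (hb : 0 ≤ b) (hc : 0 ≤ c)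
    (hF : Continuous F) :
    ∫ r in box a b c ×ˢ box a b c, ∫ η in Ioc 0 c, F (r.2.1, r.2.2.1, η) =
      a * b * c * (c * ∫ p in box a b c, F p) := by
  set G : ℝ × ℝ → ℝ := fun z ↦ ∫ η in Ioc 0 c, F (z.1, z.2, η)
  have hG : Continuous G :=
    continuous_parametric_integral_Ioc (f := fun (z : ℝ × ℝ) η ↦ F (z.1, z.2, η)) (by fun_prop) 0 c
  have hinner : ∫ q in box a b c, G (q.1, q.2.1) = c * ∫ p in box a b c, F p := by
    have hGq : Continuous fun q : ℝ × ℝ × ℝ ↦ G (q.1, q.2.1) := by fun_prop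
    rw [setIntegral_box hF, box, Measure.volume_eq_prod,
      setIntegral_prod _ (hGq.integrableOn_of_isBounded isBounded_box), ← integral_const_mul]
    refine integral_congr_ae (.of_forall fun s ↦ ?_)
    dsimp only
    rw [Measure.volume_eq_prod, setIntegral_prod_fun_fst (fun x ↦ G (s, x)),
      Real.volume_real_Ioc_of_le hc, sub_zero, smul_eq_mul]
  rw [Measure.volume_eq_prod, setIntegral_prod_fun_snd (fun q : ℝ × ℝ × ℝ ↦ G (q.1, q.2.1)),
    volume_real_box ha hb hc, hinner, smul_eq_mul]

theorem integral_box_prod_box_sq_sub_le (ha : 0 ≤ a) (hb : 0 ≤ b) (hc : 0 ≤ c)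
    (hw : ContDiff ℝ 1 w) :
    ∫ r in box a b c ×ˢ box a b c, (w r.1 - w r.2) ^ 2 ≤
      3 * (a * b * c) * (a ^ 2 * (∫ p in box a b c, fderiv ℝ w p (1, 0, 0) ^ 2)
        + b ^ 2 * (∫ p in box a b c, fderiv ℝ w p (0, 1, 0) ^ 2)
        + c ^ 2 * ∫ p in box a b c, fderiv ℝ w p (0, 0, 1) ^ 2) := by
  have hdw : Continuous (fderiv ℝ w) := hw.continuous_fderiv one_ne_zero
  have hbd : Bornology.IsBounded (box a b c ×ˢ box a b c) := isBounded_box.prod isBounded_box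
  have hL₁ : Continuous fun r : (ℝ × ℝ × ℝ) × (ℝ × ℝ × ℝ) ↦
      ∫ τ in Ioc 0 a, fderiv ℝ w (τ, r.1.2) (1, 0, 0) ^ 2 :=
    continuous_parametric_integral_Ioc (f := fun (r : (ℝ × ℝ × ℝ) × (ℝ × ℝ × ℝ)) τ ↦
      fderiv ℝ w (τ, r.1.2) (1, 0, 0) ^ 2) (by fun_prop) 0 a
  have hL₂ : Continuous fun r : (ℝ × ℝ × ℝ) × (ℝ × ℝ × ℝ) ↦
      ∫ ξ in Ioc 0 b, fderiv ℝ w (r.2.1, ξ, r.1.2.2) (0, 1, 0) ^ 2 :=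
    continuous_parametric_integral_Ioc (f := fun (r : (ℝ × ℝ × ℝ) × (ℝ × ℝ × ℝ)) ξ ↦
      fderiv ℝ w (r.2.1, ξ, r.1.2.2) (0, 1, 0) ^ 2) (by fun_prop) 0 b
  have hL₃ : Continuous fun r : (ℝ × ℝ × ℝ) × (ℝ × ℝ × ℝ) ↦
      ∫ η in Ioc 0 c, fderiv ℝ w (r.2.1, r.2.2.1, η) (0, 0, 1) ^ 2 :=
    continuous_parametric_integral_Ioc (f := fun (r : (ℝ × ℝ × ℝ) × (ℝ × ℝ × ℝ)) η ↦
      fderiv ℝ w (r.2.1, r.2.2.1, η) (0, 0, 1) ^ 2) (by fun_prop) 0 c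
  have hD : Continuous fun r : (ℝ × ℝ × ℝ) × (ℝ × ℝ × ℝ) ↦ (w r.1 - w r.2) ^ 2 := by fun_prop
  refine (setIntegral_mono_on (hD.integrableOn_of_isBounded hbd)
    (Continuous.integrableOn_of_isBounded (by fun_prop) hbd)
    (measurableSet_box.prod measurableSet_box)
    fun r hr ↦ sq_sub_le_of_mem_box hw hr.1 hr.2).trans_eq ?_
  rw [integral_const_mul, integral_add, integral_add, integral_const_mul,
    integral_const_mul, integral_const_mul,
    integral_box_prod_box_lineIntegral₁ (F := fun p ↦ fderiv ℝ w p (1, 0, 0) ^ 2) ha hb hc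
      (by fun_prop),
    integral_box_prod_box_lineIntegral₂ (F := fun p ↦ fderiv ℝ w p (0, 1, 0) ^ 2) ha hb hc
      (by fun_prop),
    integral_box_prod_box_lineIntegral₃ (F := fun p ↦ fderiv ℝ w p (0, 0, 1) ^ 2) ha hb hc
      (by fun_prop)]
  · ring
  all_goals exact Continuous.integrableOn_of_isBounded (by fun_prop) hbd

theorem integral_sub_setAverage_sq_le_box (ha : 0 < a) (hb : 0 < b) (hc : 0 < c)
    (hw : ContDiff ℝ 1 w) :
    ∫ p in box a b c, (w p - ⨍ q in box a b c, w q) ^ 2 ≤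
      3 / 2 * (a ^ 2 * (∫ p in box a b c, fderiv ℝ w p (1, 0, 0) ^ 2)
        + b ^ 2 * (∫ p in box a b c, fderiv ℝ w p (0, 1, 0) ^ 2)
        + c ^ 2 * ∫ p in box a b c, fderiv ℝ w p (0, 0, 1) ^ 2) := by
  have hvar := integral_prod_sub_sq (μ := volume.restrict (box a b c))
    (hw.continuous.memLp_two_restrict_of_isBounded isBounded_box)
  rw [Measure.prod_restrict, ← Measure.volume_eq_prod, measureReal_restrict_apply_univ,
    volume_real_box ha.le hb.le hc.le] at hvar
  have hle := hvar ▸ integral_box_prod_box_sq_sub_le ha.le hb.le hc.le hw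
  refine le_of_mul_le_mul_left (a := 2 * (a * b * c)) (hle.trans_eq ?_) (by positivity)
  ring

theorem integral_sub_setAverage_sq_le_box_norm_fderiv (ha : 0 < a) (hb : 0 < b) (hc : 0 < c)
    (hw : ContDiff ℝ 1 w) :
    ∫ p in box a b c, (w p - ⨍ q in box a b c, w q) ^ 2 ≤
      9 / 2 * max (max b c) a ^ 2 * ∫ p in box a b c, ‖fderiv ℝ w p‖ ^ 2 := by
  have hdw : Continuous (fderiv ℝ w) := hw.continuous_fderiv one_ne_zero
  have hN : Integrable (fun p ↦ ‖fderiv ℝ w p‖ ^ 2) (volume.restrict (box a b c)) :=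
    Continuous.integrableOn_of_isBounded (by fun_prop) isBounded_box
  have hterm : ∀ (d : ℝ) (e : ℝ × ℝ × ℝ), 0 ≤ d → d ≤ max (max b c) a → ‖e‖ ≤ 1 →
      d ^ 2 * ∫ p in box a b c, fderiv ℝ w p e ^ 2 ≤
        max (max b c) a ^ 2 * ∫ p in box a b c, ‖fderiv ℝ w p‖ ^ 2 :=
    fun d e hd hdM he ↦ mul_le_mul (pow_le_pow_left₀ hd hdM 2)
      (integral_sq_apply_le_integral_sq_norm hN he) (integral_nonneg fun _ ↦ sq_nonneg _)
      (sq_nonneg _)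
  refine (integral_sub_setAverage_sq_le_box ha hb hc hw).trans ?_
  linarith [hterm a (1, 0, 0) ha.le (le_max_right _ _) (by simp [Prod.norm_def]),
    hterm b (0, 1, 0) hb.le ((le_max_left _ _).trans (le_max_left _ _)) (by simp [Prod.norm_def]),
    hterm c (0, 0, 1) hc.le ((le_max_right _ _).trans (le_max_left _ _)) (by simp [Prod.norm_def])]

theorem integral_sub_setAverage_sq_le_box_sqrt (ha : 0 < a) (hb : 0 < b) (hc : 0 < c)
    (hw : ContDiff ℝ 1 w) :
    ∫ p in box a b c, (w p - ⨍ q in box a b c, w q) ^ 2 ≤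
      3 / 2 * (a * √(∫ p in box a b c, fderiv ℝ w p (1, 0, 0) ^ 2)
        + b * √(∫ p in box a b c, fderiv ℝ w p (0, 1, 0) ^ 2)
        + c * √(∫ p in box a b c, fderiv ℝ w p (0, 0, 1) ^ 2)) ^ 2 := by
  refine (integral_sub_setAverage_sq_le_box ha hb hc hw).trans ?_
  set P₁ := ∫ p in box a b c, fderiv ℝ w p (1, 0, 0) ^ 2
  set P₂ := ∫ p in box a b c, fderiv ℝ w p (0, 1, 0) ^ 2
  set P₃ := ∫ p in box a b c, fderiv ℝ w p (0, 0, 1) ^ 2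
  have hP : a ^ 2 * P₁ + b ^ 2 * P₂ + c ^ 2 * P₃ =
      (a * √P₁) ^ 2 + (b * √P₂) ^ 2 + (c * √P₃) ^ 2 := by
    simp only [mul_pow, P₁, P₂, P₃, sq_sqrt (integral_nonneg fun _ ↦ sq_nonneg _)]
  have hx : 0 ≤ a * √P₁ := by positivity
  have hy : 0 ≤ b * √P₂ := by positivity
  have hz : 0 ≤ c * √P₃ := by positivity
  rw [hP]
  nlinarith [mul_nonneg hx hy, mul_nonneg hx hz, mul_nonneg hy hz]

end Box

/-- Negative-norm (duality) bound, r = 0, s = -1 case of Lemma 5: for the projection U of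
u onto constants on the box S = (0,Δt)×(0,h₁)×(0,h₂), and every H¹ test function v,
|∫_S (u - U) v| ≤ C max{h₁,h₂,Δt} (Δt ‖∂_t u‖ + h₁ ‖∂_x u‖ + h₂ ‖∂_y u‖) ‖v‖_{H¹(S)}. -/
theorem stmt_12 :
    ∃ C : ℝ, 0 < C ∧ ∀ Δt h₁ h₂ : ℝ, 0 < Δt → 0 < h₁ → 0 < h₂ →
      ∀ u v : ℝ × ℝ × ℝ → ℝ, ContDiff ℝ 1 u → ContDiff ℝ 1 v →
      |∫ p in Set.Ioc 0 Δt ×ˢ (Set.Ioc 0 h₁ ×ˢ Set.Ioc 0 h₂),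
          (u p - (Δt * h₁ * h₂)⁻¹ *
            (∫ q in Set.Ioc 0 Δt ×ˢ (Set.Ioc 0 h₁ ×ˢ Set.Ioc 0 h₂), u q)) * v p| ≤
        C * max (max h₁ h₂) Δt *
          (Δt * Real.sqrt (∫ p in Set.Ioc 0 Δt ×ˢ (Set.Ioc 0 h₁ ×ˢ Set.Ioc 0 h₂),
                (fderiv ℝ u p (1, 0, 0))^2)
            + h₁ * Real.sqrt (∫ p in Set.Ioc 0 Δt ×ˢ (Set.Ioc 0 h₁ ×ˢ Set.Ioc 0 h₂),
                (fderiv ℝ u p (0, 1, 0))^2)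
            + h₂ * Real.sqrt (∫ p in Set.Ioc 0 Δt ×ˢ (Set.Ioc 0 h₁ ×ˢ Set.Ioc 0 h₂),
                (fderiv ℝ u p (0, 0, 1))^2)) *
          Real.sqrt ((∫ p in Set.Ioc 0 Δt ×ˢ (Set.Ioc 0 h₁ ×ˢ Set.Ioc 0 h₂), (v p)^2)
            + ∫ p in Set.Ioc 0 Δt ×ˢ (Set.Ioc 0 h₁ ×ˢ Set.Ioc 0 h₂), ‖fderiv ℝ v p‖^2) := by
  refine ⟨3, by norm_num, fun Δt h₁ h₂ hΔt hh₁ hh₂ u v hu hv ↦ ?_⟩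
  have hS : Bornology.IsBounded (box Δt h₁ h₂) := isBounded_box
  have hmean : (Δt * h₁ * h₂)⁻¹ * ∫ q in box Δt h₁ h₂, u q = ⨍ q in box Δt h₁ h₂, u q := by
    rw [setAverage_eq, volume_real_box hΔt.le hh₁.le hh₂.le, smul_eq_mul]
  rw [show Ioc 0 Δt ×ˢ (Ioc 0 h₁ ×ˢ Ioc 0 h₂) = box Δt h₁ h₂ from rfl, hmean]
  have hX := sq_integral_sub_average_mul_le
    (hu.continuous.memLp_two_restrict_of_isBounded (μ := volume) hS)
    (hv.continuous.memLp_two_restrict_of_isBounded (μ := volume) hS)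
  have hPu := integral_sub_setAverage_sq_le_box_sqrt hΔt hh₁ hh₂ hu
  have hPv := integral_sub_setAverage_sq_le_box_norm_fderiv hΔt hh₁ hh₂ hv
  have hV : 0 ≤ ∫ p in box Δt h₁ h₂, v p ^ 2 := integral_nonneg fun _ ↦ by positivity
  have hN : 0 ≤ ∫ p in box Δt h₁ h₂, ‖fderiv ℝ v p‖ ^ 2 := integral_nonneg fun _ ↦ by positivity
  refine abs_le_of_sq_le_sq (hX.trans ?_) (by positivity)
  rw [mul_pow, Real.sq_sqrt (by positivity)]
  have hMSu := sq_nonneg (max (max h₁ h₂) Δt *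
    (Δt * √(∫ p in box Δt h₁ h₂, fderiv ℝ u p (1, 0, 0) ^ 2)
      + h₁ * √(∫ p in box Δt h₁ h₂, fderiv ℝ u p (0, 1, 0) ^ 2)
      + h₂ * √(∫ p in box Δt h₁ h₂, fderiv ℝ u p (0, 0, 1) ^ 2)))
  nlinarith [mul_le_mul hPu hPv (integral_nonneg fun _ ↦ sq_nonneg _) (by positivity),
    mul_nonneg hMSu hV, mul_nonneg hMSu hN]
end

section
/- Summing the local graded-mesh bounds: if β ≥ 1 and E_k ≤ C·h_k^{3/2}·x_{k−1}^{−a−1}·h_k (k ≥ 2) and E₁ ≤ C·N^{−β(1/2−a)} with h_k = (k/N)^β − ((k−1)/N)^β, x_k = (k/N)^β, and 0 < a < 1/2, then (Σ_{k=1}^N E_k²)^{1/2} ≤ C'·N^{−min{β(1/2−a), 3/2}+ε} for every ε > 0, with C' independent of N. -/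
open Real

/-!
Convexity of `t ↦ t ^ β` gives `h_k ≤ β (k/N)^(β-1) / N`, and `x_{k-1} ≥ (k/(2N))^β` for `k ≥ 2`,
so the local bound becomes `E_k ≤ C c (k/N)^(β(3/2-a)-5/2) N^(-5/2)` with
`c = β^(5/2) 2^(β(a+1))`. As `1/N ≤ k/N ≤ 1` and `β ≥ 1`, this is at most `C c N^(-(m+1/2))`
with `m = min (β(1/2-a)) (3/2)`, so the `N - 1` elements `k ≥ 2` contribute at most
`(C c N^(-m))²` to the sum of squares, while `E_1 ≤ C N^(-m)`.
-/

theorem rpow_mul_rpow_neg_le {N u p q r : ℝ} (hN : 1 ≤ N) (hu : N⁻¹ ≤ u) (hu1 : u ≤ 1)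
    (hpr : p ≤ r) (hpqr : p ≤ q + r) : u ^ q * N ^ (-r) ≤ N ^ (-p) := by
  have hN0 : 0 < N := by linarith
  have hu0 : 0 < u := (inv_pos.mpr hN0).trans_le hu
  rcases le_or_gt 0 q with hq | hq
  · calc u ^ q * N ^ (-r) ≤ 1 * N ^ (-r) := by
          gcongr; exact rpow_le_one hu0.le hu1 hq
      _ ≤ N ^ (-p) := by rw [one_mul]; gcongr
  · calc u ^ q * N ^ (-r) ≤ N⁻¹ ^ q * N ^ (-r) := by
          gcongr ?_ * _
          exact rpow_le_rpow_of_nonpos (inv_pos.mpr hN0) hu hq.le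
      _ = N ^ (-(q + r)) := by
          rw [inv_rpow hN0.le, ← rpow_neg hN0.le, ← rpow_add hN0, neg_add]
      _ ≤ N ^ (-p) := by gcongr

theorem sqrt_sum_sq_le_add {N : ℕ} (hN : 1 ≤ N) {E : ℕ → ℝ} {A B : ℝ} (hE : ∀ k, 0 ≤ E k)
    (hB : 0 ≤ B) (h1 : E 1 ≤ A) (hrest : ∀ k, 2 ≤ k → k ≤ N → E k ≤ B / √N) :
    √(∑ k ∈ Finset.Icc 1 N, E k ^ 2) ≤ A + B := by
  have hN0 : (0 : ℝ) < N := by exact_mod_cast hN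
  have htail : ∑ k ∈ Finset.Ioc 1 N, E k ^ 2 ≤ B ^ 2 := calc
    ∑ k ∈ Finset.Ioc 1 N, E k ^ 2 ≤ (Finset.Ioc 1 N).card • (B / √N) ^ 2 := by
      refine Finset.sum_le_card_nsmul _ _ _ fun k hk ↦ ?_
      obtain ⟨hk1, hkN⟩ := Finset.mem_Ioc.mp hk
      gcongr
      exacts [hE k, hrest k hk1 hkN]
    _ = (N - 1 : ℕ) * B ^ 2 / N := by
      rw [Nat.card_Ioc, nsmul_eq_mul, div_pow, sq_sqrt hN0.le, mul_div_assoc]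
    _ ≤ B ^ 2 := by
      rw [div_le_iff₀ hN0, mul_comm]
      gcongr
      exact_mod_cast Nat.sub_le N 1
  rw [Finset.Icc_eq_cons_Ioc hN, Finset.sum_cons, sqrt_le_iff]
  have hA : 0 ≤ A := (hE 1).trans h1
  refine ⟨by positivity, ?_⟩
  nlinarith [pow_le_pow_left₀ (hE 1) h1 2]

theorem rpow_sub_rpow_le_mul_rpow_mul_sub {x y β : ℝ} (hβ : 1 ≤ β) (hy : 0 ≤ y) (hyx : y ≤ x) :
    x ^ β - y ^ β ≤ β * x ^ (β - 1) * (x - y) := by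
  rcases hyx.eq_or_lt with rfl | hlt
  · simp
  have hslope := (convexOn_rpow hβ).slope_le_of_hasDerivAt hy (hy.trans hlt.le) hlt
    (hasDerivAt_rpow_const (Or.inr hβ))
  rwa [slope_def_field, div_le_iff₀ (sub_pos.mpr hlt)] at hslope

theorem graded_local_error_le {β a u v : ℝ} (hβ : 1 ≤ β) (ha : -1 ≤ a) (hu : 0 < u)
    (hv : u / 2 ≤ v) (hvu : v ≤ u) :
    (u ^ β - v ^ β) ^ (3 / 2 : ℝ) * (v ^ β) ^ (-a - 1) * (u ^ β - v ^ β) ≤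
      β ^ (5 / 2 : ℝ) * 2 ^ (β * (a + 1)) * u ^ (β * (3 / 2 - a) - 5 / 2) *
        (u - v) ^ (5 / 2 : ℝ) := by
  have hβ0 : 0 < β := by linarith
  have hv0 : 0 < v := by linarith
  have hh0 : 0 ≤ u ^ β - v ^ β := sub_nonneg.mpr (rpow_le_rpow hv0.le hvu hβ0.le)
  have hh : u ^ β - v ^ β ≤ β * u ^ (β - 1) * (u - v) :=
    rpow_sub_rpow_le_mul_rpow_mul_sub hβ hv0.le hvu
  have hx : (v ^ β) ^ (-a - 1) ≤ (u / 2) ^ (β * (-a - 1)) := by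
    rw [← rpow_mul hv0.le]
    exact rpow_le_rpow_of_nonpos (by positivity) hv (by nlinarith)
  calc (u ^ β - v ^ β) ^ (3 / 2 : ℝ) * (v ^ β) ^ (-a - 1) * (u ^ β - v ^ β)
      = (u ^ β - v ^ β) ^ (5 / 2 : ℝ) * (v ^ β) ^ (-a - 1) := by
        rw [mul_right_comm, ← rpow_add_one' hh0 (by norm_num)]; norm_num
    _ ≤ (β * u ^ (β - 1) * (u - v)) ^ (5 / 2 : ℝ) * (u / 2) ^ (β * (-a - 1)) := by
        gcongr
    _ = β ^ (5 / 2 : ℝ) * 2 ^ (β * (a + 1)) * u ^ (β * (3 / 2 - a) - 5 / 2) *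
          (u - v) ^ (5 / 2 : ℝ) := by
        have huv : 0 ≤ u - v := sub_nonneg.mpr hvu
        rw [mul_rpow (by positivity) huv, mul_rpow hβ0.le (by positivity), ← rpow_mul hu.le,
          div_rpow hu.le zero_le_two,
          show β * (3 / 2 - a) - 5 / 2 = (β - 1) * (5 / 2) + β * (-a - 1) by ring,
          rpow_add hu, show β * (-a - 1) = -(β * (a + 1)) by ring, rpow_neg zero_le_two]
        field_simp

theorem graded_mesh_local_error_le {a β p : ℝ} (hβ : 1 ≤ β) (ha : -1 ≤ a) (hp : p ≤ 5 / 2)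
    (hpβ : p ≤ β * (3 / 2 - a)) {k N : ℕ} (hk : 2 ≤ k) (hkN : k ≤ N) :
    (((k : ℝ) / N) ^ β - (((k : ℝ) - 1) / N) ^ β) ^ ((3 : ℝ) / 2) *
        ((((k : ℝ) - 1) / N) ^ β) ^ (-a - 1) * (((k : ℝ) / N) ^ β - (((k : ℝ) - 1) / N) ^ β) ≤
      β ^ (5 / 2 : ℝ) * 2 ^ (β * (a + 1)) * (N : ℝ) ^ (-p) := by
  have hk2 : (2 : ℝ) ≤ k := by exact_mod_cast hk
  have hkN' : (k : ℝ) ≤ N := by exact_mod_cast hkN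
  have hN0 : (0 : ℝ) < N := by linarith
  have hu1 : (k : ℝ) / N ≤ 1 := (div_le_one hN0).mpr hkN'
  calc _ ≤ β ^ (5 / 2 : ℝ) * 2 ^ (β * (a + 1)) * ((k : ℝ) / N) ^ (β * (3 / 2 - a) - 5 / 2) *
          ((k : ℝ) / N - ((k : ℝ) - 1) / N) ^ (5 / 2 : ℝ) :=
        graded_local_error_le hβ ha (by positivity) (by rw [div_right_comm]; gcongr; linarith)
          (by gcongr; linarith)
    _ = β ^ (5 / 2 : ℝ) * 2 ^ (β * (a + 1)) *
          (((k : ℝ) / N) ^ (β * (3 / 2 - a) - 5 / 2) * (N : ℝ) ^ (-(5 / 2 : ℝ))) := by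
        rw [← sub_div, sub_sub_cancel, one_div, inv_rpow hN0.le, ← rpow_neg hN0.le, mul_assoc]
    _ ≤ β ^ (5 / 2 : ℝ) * 2 ^ (β * (a + 1)) * (N : ℝ) ^ (-p) := by
        gcongr
        exact rpow_mul_rpow_neg_le (by linarith) (by rw [inv_eq_one_div]; gcongr; linarith) hu1 hp
          (by linarith)

theorem stmt_14_general (a β C ε : ℝ) (ha0 : 0 < a) (hβ : 1 ≤ β)
    (hC : 0 < C) (hε : 0 < ε) :
    ∃ C' : ℝ, 0 < C' ∧ ∀ N : ℕ, 1 ≤ N → ∀ E : ℕ → ℝ,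
      (∀ k, 0 ≤ E k) →
      E 1 ≤ C * (N:ℝ) ^ (-β * (1/2 - a)) →
      (∀ k : ℕ, 2 ≤ k → k ≤ N →
        E k ≤ C * (((k:ℝ)/N) ^ β - (((k:ℝ) - 1)/N) ^ β) ^ ((3:ℝ)/2) *
              ((((k:ℝ) - 1)/N) ^ β) ^ (-a - 1) *
              (((k:ℝ)/N) ^ β - (((k:ℝ) - 1)/N) ^ β)) →
      Real.sqrt (∑ k ∈ Finset.Icc 1 N, (E k)^2) ≤
        C' * (N:ℝ) ^ (-(min (β*(1/2 - a)) (3/2)) + ε) := by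
  set m := min (β * (1 / 2 - a)) (3 / 2)
  set K := C * (β ^ (5 / 2 : ℝ) * 2 ^ (β * (a + 1)))
  refine ⟨C + K, by positivity, fun N hN E hE hE1 hEk ↦ ?_⟩
  have hN1 : (1 : ℝ) ≤ N := by exact_mod_cast hN
  have hN0 : (0 : ℝ) < N := by linarith
  have hhead : E 1 ≤ C * (N : ℝ) ^ (-m) :=
    hE1.trans (by gcongr; linarith [min_le_left (β * (1 / 2 - a)) (3 / 2)])
  have hrest : ∀ k, 2 ≤ k → k ≤ N → E k ≤ K * (N : ℝ) ^ (-m) / √N := fun k hk hkN ↦ by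
    have hterm := graded_mesh_local_error_le (a := a) (p := m + 1 / 2) hβ (by linarith)
      (by linarith [min_le_right (β * (1 / 2 - a)) (3 / 2)])
      (by nlinarith [min_le_left (β * (1 / 2 - a)) (3 / 2)]) hk hkN
    have hpow : (N : ℝ) ^ (-(m + 1 / 2)) = (N : ℝ) ^ (-m) / √N := by
      rw [sqrt_eq_rpow, neg_add, rpow_add hN0, rpow_neg hN0.le (1 / 2), ← div_eq_mul_inv]
    refine (hEk k hk hkN).trans ?_
    rw [mul_assoc C, mul_assoc C]
    refine (mul_le_mul_of_nonneg_left hterm hC.le).trans_eq ?_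
    rw [hpow]
    ring
  calc √(∑ k ∈ Finset.Icc 1 N, E k ^ 2) ≤ C * (N : ℝ) ^ (-m) + K * (N : ℝ) ^ (-m) :=
        sqrt_sum_sq_le_add hN hE (by positivity) hhead hrest
    _ = (C + K) * (N : ℝ) ^ (-m) := by ring
    _ ≤ (C + K) * (N : ℝ) ^ (-m + ε) := by gcongr; linarith

/-- Summation step in the proof of Lemma 7: if the local errors E_k on the β-graded mesh
(h_k = (k/N)^β - ((k-1)/N)^β, x_k = (k/N)^β) satisfy E_k ≤ C h_k^{3/2} x_{k-1}^{-a-1} h_k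
for 2 ≤ k ≤ N and E₁ ≤ C N^{-β(1/2-a)}, then (Σ_{k=1}^N E_k²)^{1/2} ≤
C' N^{-min{β(1/2-a), 3/2} + ε} with C' independent of N and of E. -/
theorem stmt_14 (a β C ε : ℝ) (ha0 : 0 < a) (ha1 : a < 1/2) (hβ : 1 ≤ β)
    (hC : 0 < C) (hε : 0 < ε) :
    ∃ C' : ℝ, 0 < C' ∧ ∀ N : ℕ, 1 ≤ N → ∀ E : ℕ → ℝ,
      (∀ k, 0 ≤ E k) →
      E 1 ≤ C * (N:ℝ) ^ (-β * (1/2 - a)) →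
      (∀ k : ℕ, 2 ≤ k → k ≤ N →
        E k ≤ C * (((k:ℝ)/N) ^ β - (((k:ℝ) - 1)/N) ^ β) ^ ((3:ℝ)/2) *
              ((((k:ℝ) - 1)/N) ^ β) ^ (-a - 1) *
              (((k:ℝ)/N) ^ β - (((k:ℝ) - 1)/N) ^ β)) →
      Real.sqrt (∑ k ∈ Finset.Icc 1 N, (E k)^2) ≤
        C' * (N:ℝ) ^ (-(min (β*(1/2 - a)) (3/2)) + ε) :=
  stmt_14_general a β C ε ha0 hβ hC hε
end
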